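/- For T ~ IWL(φ,λ) with φ > 0 and λ > 0, E[1/T] = (φ+1)/λ − 1/(λ+φ) = φ(λ+φ+1)/(λ(λ+φ)). -/

import Mathlib

open MeasureTheory

/-- Density of the inverse weighted Lindley (IWL) distribution. -/
noncomputable def iwl (φ lam t : ℝ) : ℝ :=
  lam ^ (φ + 1) / ((φ + lam) * Real.Gamma φ) * t ^ (-φ - 1) * (1 + 1 / t) *
    Real.exp (-lam / t)

/-!
Substituting `y = 1 / t` turns `E[1/T]` into `C ∫₀^∞ y^φ (1 + y) e^{-λy} dy` with
`C = λ^(φ+1) / ((φ+λ) Γ(φ))`, a sum of two Gamma integrals, equal to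
`C · Γ(φ+1) / λ^(φ+1) · (1 + (φ+1)/λ) = φ (λ+φ+1) / (λ (λ+φ))`.
-/

open Real Set

theorem MeasureTheory.integral_comp_inv_Ioi {E : Type*} [NormedAddCommGroup E] [NormedSpace ℝ E]
    (g : ℝ → E) : ∫ t in Ioi 0, (t ^ 2)⁻¹ • g t⁻¹ = ∫ y in Ioi 0, g y := by
  rw [← integral_comp_rpow_Ioi g (by norm_num : (-1 : ℝ) ≠ 0)]
  refine setIntegral_congr_fun measurableSet_Ioi fun t ht => ?_
  have ht : 0 < t := ht
  rw [rpow_neg_one, show (-1 : ℝ) - 1 = -(2 : ℕ) by norm_num, rpow_neg ht.le, rpow_natCast]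
  norm_num

namespace Real

theorem integrableOn_rpow_mul_exp_neg_mul_Ioi {s r : ℝ} (hs : -1 < s) (hr : 0 < r) :
    IntegrableOn (fun x : ℝ => x ^ s * exp (-(r * x))) (Ioi 0) := by
  simpa [neg_mul] using integrableOn_rpow_mul_exp_neg_mul_rpow hs one_pos hr

theorem integral_rpow_mul_one_add_mul_exp_neg_mul_Ioi {s r : ℝ} (hs : -1 < s) (hr : 0 < r) :
    ∫ x in Ioi 0, x ^ s * (1 + x) * exp (-(r * x)) =
      Gamma (s + 1) / r ^ (s + 1) * (1 + (s + 1) / r) := by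
  have hsplit : ∫ x in Ioi 0, x ^ s * (1 + x) * exp (-(r * x)) =
      ∫ x in Ioi 0, x ^ s * exp (-(r * x)) + x ^ (s + 1) * exp (-(r * x)) := by
    refine setIntegral_congr_fun measurableSet_Ioi fun x hx => ?_
    rw [rpow_add_one (ne_of_gt hx)]
    ring
  have h₀ := integral_rpow_mul_exp_neg_mul_Ioi (by linarith : 0 < s + 1) hr
  have h₁ := integral_rpow_mul_exp_neg_mul_Ioi (by linarith : 0 < s + 1 + 1) hr
  rw [add_sub_cancel_right] at h₀ h₁
  rw [hsplit, integral_add (integrableOn_rpow_mul_exp_neg_mul_Ioi hs hr)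
    (integrableOn_rpow_mul_exp_neg_mul_Ioi (by linarith) hr), h₀, h₁,
    Gamma_add_one (s := s + 1) (by linarith), rpow_add_one (x := 1 / r) (by positivity) (s + 1),
    div_rpow zero_le_one hr.le, one_rpow]
  field_simp

end Real

theorem one_div_mul_iwl {φ lam t : ℝ} (ht : 0 < t) :
    1 / t * iwl φ lam t = (t ^ 2)⁻¹ * (lam ^ (φ + 1) / ((φ + lam) * Gamma φ) *
      (t⁻¹ ^ φ * (1 + t⁻¹) * exp (-(lam * t⁻¹)))) := by
  rw [iwl, inv_rpow ht.le, ← rpow_neg ht.le, show -φ - 1 = -φ + -1 by ring,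
    rpow_add ht, rpow_neg_one]
  field_simp

/-- `E[1/T] = (φ+1)/λ − 1/(λ+φ) = φ(λ+φ+1)/(λ(λ+φ))` for `T ~ IWL(φ,λ)`. -/
theorem iwl_inv_moment (φ lam : ℝ) (hφ : 0 < φ) (hlam : 0 < lam) :
    (∫ t in Set.Ioi (0 : ℝ), (1 / t) * iwl φ lam t =
        (φ + 1) / lam - 1 / (lam + φ)) ∧
      (φ + 1) / lam - 1 / (lam + φ) = φ * (lam + φ + 1) / (lam * (lam + φ)) := by
  have hmoment : ∫ t in Ioi 0, 1 / t * iwl φ lam t =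
      lam ^ (φ + 1) / ((φ + lam) * Gamma φ) *
        (Gamma (φ + 1) / lam ^ (φ + 1) * (1 + (φ + 1) / lam)) := by
    rw [setIntegral_congr_fun measurableSet_Ioi fun t ht => one_div_mul_iwl ht]
    refine (integral_comp_inv_Ioi fun y => lam ^ (φ + 1) / ((φ + lam) * Gamma φ) *
      (y ^ φ * (1 + y) * exp (-(lam * y)))).trans ?_
    rw [integral_const_mul, integral_rpow_mul_one_add_mul_exp_neg_mul_Ioi (by linarith) hlam]
  have hpow : lam ^ (φ + 1) ≠ 0 := by positivity
  have hΓ : Gamma φ ≠ 0 := (Gamma_pos_of_pos hφ).ne'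
  refine ⟨?_, by field_simp; ring⟩
  rw [hmoment, Gamma_add_one hφ.ne']
  field_simp
  ring
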